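/- arXiv:2011.12272 — 2 statements merged into one kernel-verified Lean document; each statement's English description precedes it below -/
import Mathlib

section
/- Let M and N be positive integers with M ≥ N+1. Let σ > 0 and σ₁,…,σ_M > 0, set W_ρ = diag(1/σ₁²,…,1/σ_M²) and W_τ = (1/σ²)·I_M. Let G₀, G₁, G₂ be real M×(N+1) matrices with G₂ᵀG₂ invertible. Define F_OWLAS = G₀ᵀ W_ρ G₀ and the block matrix F_Mode2 = [[G₀ᵀW_ρG₀ + G₁ᵀW_τG₁, G₁ᵀW_τG₂],[G₂ᵀW_τG₁, G₂ᵀW_τG₂]]. Assume F_OWLAS and F_Mode2 are positive definite. Then for every index i with 1 ≤ i ≤ N+1, the diagonal entries of the inverses satisfy [F_Mode2⁻¹]_{i,i} ≤ [F_OWLAS⁻¹]_{i,i} (Theorem 2: the localization and synchronization accuracy of TWLAS Mode 2 is higher than or equal to that of the conventional one-way TOA method OWLAS). -/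
/-!
For positive definite `F`, `xᵀ F⁻¹ x = max_w (2 xᵀw - wᵀ F w)`, the maximum being attained at
`w = F⁻¹ x`. Evaluate this for the Mode 2 matrix at `x = (eᵢ, 0)` and its maximiser `(z₁, z₂)`: the
quadratic form splits as `z₁ᵀ F_OWLAS z₁ + ‖G₁ z₁ + G₂ z₂‖²_{W_τ}`, so dropping the nonnegative
second term bounds `[F_Mode2⁻¹]ᵢᵢ` by the OWLAS objective at `w = z₁`, hence by `[F_OWLAS⁻¹]ᵢᵢ`.
-/

open Matrix

namespace Matrix

variable {l m n : Type*} [Fintype l] [Fintype m] [Fintype n]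

lemma dotProduct_transpose_mul_mul_mulVec {R : Type*} [CommSemiring R]
    (A : Matrix l m R) (W : Matrix l l R) (B : Matrix l n R) (x : m → R) (y : n → R) :
    x ⬝ᵥ ((Aᵀ * W * B) *ᵥ y) = (A *ᵥ x) ⬝ᵥ (W *ᵥ (B *ᵥ y)) := by
  rw [← mulVec_mulVec, ← mulVec_mulVec, dotProduct_mulVec x Aᵀ, vecMul_transpose]

lemma sumElim_dotProduct_fromBlocks_mulVec_sumElim {R : Type*} [CommRing R]
    (A : Matrix m m R) (W : Matrix l l R) (G₁ : Matrix l m R) (G₂ : Matrix l n R)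
    (x : m → R) (y : n → R) :
    Sum.elim x y ⬝ᵥ (fromBlocks (A + G₁ᵀ * W * G₁) (G₁ᵀ * W * G₂) (G₂ᵀ * W * G₁) (G₂ᵀ * W * G₂)
        *ᵥ Sum.elim x y)
      = x ⬝ᵥ (A *ᵥ x) + (G₁ *ᵥ x + G₂ *ᵥ y) ⬝ᵥ (W *ᵥ (G₁ *ᵥ x + G₂ *ᵥ y)) := by
  simp only [fromBlocks_mulVec, sumElim_dotProduct_sumElim, Sum.elim_comp_inl, Sum.elim_comp_inr,
    add_mulVec, dotProduct_add, dotProduct_transpose_mul_mul_mulVec, mulVec_add, add_dotProduct]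
  ring

lemma PosDef.two_mul_dotProduct_sub_le_dotProduct_inv_mulVec [DecidableEq n]
    {F : Matrix n n ℝ} (hF : F.PosDef) (x w : n → ℝ) :
    2 * (x ⬝ᵥ w) - w ⬝ᵥ (F *ᵥ w) ≤ x ⬝ᵥ (F⁻¹ *ᵥ x) := by
  set z := F⁻¹ *ᵥ x
  have hFz : F *ᵥ z = x := by
    rw [mulVec_mulVec, mul_nonsing_inv _ ((isUnit_iff_isUnit_det F).mp hF.isUnit), one_mulVec]
  have hzF : z ᵥ* F = x := by
    have hsymm : Fᵀ = F := by simpa using hF.isHermitian.eq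
    rw [← hsymm, vecMul_transpose, hFz]
  have hnonneg : 0 ≤ (w - z) ⬝ᵥ (F *ᵥ (w - z)) := by
    simpa only [star_trivial] using hF.posSemidef.dotProduct_mulVec_nonneg (w - z)
  have hexpand : (w - z) ⬝ᵥ (F *ᵥ (w - z)) = w ⬝ᵥ (F *ᵥ w) - 2 * (x ⬝ᵥ w) + x ⬝ᵥ z := by
    rw [mulVec_sub, dotProduct_sub, sub_dotProduct, sub_dotProduct, hFz, dotProduct_mulVec z,
      hzF, dotProduct_comm w x, dotProduct_comm z x]
    ring
  linarith

variable [DecidableEq m] [DecidableEq n]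

theorem sumElim_zero_dotProduct_inv_fromBlocks_mulVec_le {A : Matrix m m ℝ} (hA : A.PosDef)
    {W : Matrix l l ℝ} (hW : W.PosSemidef) (G₁ : Matrix l m ℝ) (G₂ : Matrix l n ℝ)
    (hF : IsUnit
      (fromBlocks (A + G₁ᵀ * W * G₁) (G₁ᵀ * W * G₂) (G₂ᵀ * W * G₁) (G₂ᵀ * W * G₂)))
    (x : m → ℝ) :
    Sum.elim x 0 ⬝ᵥ ((fromBlocks (A + G₁ᵀ * W * G₁) (G₁ᵀ * W * G₂) (G₂ᵀ * W * G₁)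
        (G₂ᵀ * W * G₂))⁻¹ *ᵥ Sum.elim x 0) ≤ x ⬝ᵥ (A⁻¹ *ᵥ x) := by
  set F := fromBlocks (A + G₁ᵀ * W * G₁) (G₁ᵀ * W * G₂) (G₂ᵀ * W * G₁) (G₂ᵀ * W * G₂)
  set u : m ⊕ n → ℝ := Sum.elim x 0
  set z := F⁻¹ *ᵥ u
  set z₁ := z ∘ Sum.inl
  set z₂ := z ∘ Sum.inr
  set v := G₁ *ᵥ z₁ + G₂ *ᵥ z₂
  have hz : z = Sum.elim z₁ z₂ := (Sum.elim_comp_inl_inr z).symm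
  have hFz : F *ᵥ z = u := by
    rw [mulVec_mulVec, mul_nonsing_inv _ ((isUnit_iff_isUnit_det F).mp hF), one_mulVec]
  calc u ⬝ᵥ z = 2 * (u ⬝ᵥ z) - z ⬝ᵥ (F *ᵥ z) := by rw [hFz, dotProduct_comm z]; ring
    _ = 2 * (x ⬝ᵥ z₁) - z₁ ⬝ᵥ (A *ᵥ z₁) - v ⬝ᵥ (W *ᵥ v) := by
      rw [hz, sumElim_dotProduct_fromBlocks_mulVec_sumElim, sumElim_dotProduct_sumElim,
        zero_dotProduct]
      ring
    _ ≤ 2 * (x ⬝ᵥ z₁) - z₁ ⬝ᵥ (A *ᵥ z₁) := by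
      simpa only [star_trivial, sub_le_self_iff] using hW.dotProduct_mulVec_nonneg v
    _ ≤ x ⬝ᵥ (A⁻¹ *ᵥ x) := hA.two_mul_dotProduct_sub_le_dotProduct_inv_mulVec x z₁

theorem inv_fromBlocks_apply_inl_inl_le {A : Matrix m m ℝ} (hA : A.PosDef)
    {W : Matrix l l ℝ} (hW : W.PosSemidef) (G₁ : Matrix l m ℝ) (G₂ : Matrix l n ℝ)
    (hF : IsUnit
      (fromBlocks (A + G₁ᵀ * W * G₁) (G₁ᵀ * W * G₂) (G₂ᵀ * W * G₁) (G₂ᵀ * W * G₂)))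
    (i : m) :
    (fromBlocks (A + G₁ᵀ * W * G₁) (G₁ᵀ * W * G₂) (G₂ᵀ * W * G₁) (G₂ᵀ * W * G₂))⁻¹
      (Sum.inl i) (Sum.inl i) ≤ A⁻¹ i i := by
  have := sumElim_zero_dotProduct_inv_fromBlocks_mulVec_le hA hW G₁ G₂ hF (Pi.single i 1)
  simpa [single_dotProduct, mulVec_single] using this

end Matrix

theorem twlas_mode2_better_than_owlas_general
    (M N : ℕ)
    (σ : ℝ)
    (Wρ : Matrix (Fin M) (Fin M) ℝ)
    (Wτ : Matrix (Fin M) (Fin M) ℝ)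
    (hWτ : Wτ = (1 / σ ^ 2) • (1 : Matrix (Fin M) (Fin M) ℝ))
    (G₀ G₁ G₂ : Matrix (Fin M) (Fin (N + 1)) ℝ)
    (FOWLAS : Matrix (Fin (N + 1)) (Fin (N + 1)) ℝ)
    (hFOWLAS : FOWLAS = G₀ᵀ * Wρ * G₀)
    (FMode2 : Matrix (Fin (N + 1) ⊕ Fin (N + 1)) (Fin (N + 1) ⊕ Fin (N + 1)) ℝ)
    (hFMode2 : FMode2 = Matrix.fromBlocks
      (G₀ᵀ * Wρ * G₀ + G₁ᵀ * Wτ * G₁) (G₁ᵀ * Wτ * G₂) (G₂ᵀ * Wτ * G₁) (G₂ᵀ * Wτ * G₂))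
    (hFOWLASpd : FOWLAS.PosDef) (hFMode2pd : FMode2.PosDef) :
    ∀ i : Fin (N + 1),
      FMode2⁻¹ (Sum.inl i) (Sum.inl i) ≤ FOWLAS⁻¹ i i := by
  subst hFOWLAS hFMode2
  have hWτ_psd : Wτ.PosSemidef := hWτ ▸ PosSemidef.one.smul (by positivity)
  exact inv_fromBlocks_apply_inl_inl_le hFOWLASpd hWτ_psd G₁ G₂ hFMode2pd.isUnit

/-- Theorem 2 of the paper: the localization and synchronization accuracy of
TWLAS Mode 2 is higher than or equal to that of the conventional one-way TOA
method (OWLAS): `[F_Mode2⁻¹]_{i,i} ≤ [F_OWLAS⁻¹]_{i,i}` for `i = 1, …, N+1`. -/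
theorem twlas_mode2_better_than_owlas
    (M N : ℕ) (hM : 0 < M) (hN : 0 < N) (hMN : N + 1 ≤ M)
    (σ : ℝ) (hσ : 0 < σ) (σa : Fin M → ℝ) (hσa : ∀ i, 0 < σa i)
    (Wρ : Matrix (Fin M) (Fin M) ℝ)
    (hWρ : Wρ = Matrix.diagonal fun i => 1 / (σa i) ^ 2)
    (Wτ : Matrix (Fin M) (Fin M) ℝ)
    (hWτ : Wτ = (1 / σ ^ 2) • (1 : Matrix (Fin M) (Fin M) ℝ))
    (G₀ G₁ G₂ : Matrix (Fin M) (Fin (N + 1)) ℝ)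
    (hG₂ : IsUnit (G₂ᵀ * G₂).det)
    (FOWLAS : Matrix (Fin (N + 1)) (Fin (N + 1)) ℝ)
    (hFOWLAS : FOWLAS = G₀ᵀ * Wρ * G₀)
    (FMode2 : Matrix (Fin (N + 1) ⊕ Fin (N + 1)) (Fin (N + 1) ⊕ Fin (N + 1)) ℝ)
    (hFMode2 : FMode2 = Matrix.fromBlocks
      (G₀ᵀ * Wρ * G₀ + G₁ᵀ * Wτ * G₁) (G₁ᵀ * Wτ * G₂) (G₂ᵀ * Wτ * G₁) (G₂ᵀ * Wτ * G₂))
    (hFOWLASpd : FOWLAS.PosDef) (hFMode2pd : FMode2.PosDef) :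
    ∀ i : Fin (N + 1),
      FMode2⁻¹ (Sum.inl i) (Sum.inl i) ≤ FOWLAS⁻¹ i i :=
  twlas_mode2_better_than_owlas_general M N σ Wρ Wτ hWτ G₀ G₁ G₂ FOWLAS hFOWLAS FMode2 hFMode2
    hFOWLASpd hFMode2pd
end

section
/- Let M and N be positive integers, let σ > 0, W_τ = (1/σ²)·I_M, and let W_ρ be an M×M symmetric positive definite matrix. Let G₀, G₁ be real M×(N+1) matrices, let P be an invertible real (N+1)×(N+1) matrix and δt ≠ 0 a real number, and set G₂ = δt·G₁·P. Assume G₁ᵀG₁ is invertible, F_OWLAS = G₀ᵀW_ρG₀ is positive definite, and the block matrix F_Mode2 = [[G₀ᵀW_ρG₀ + G₁ᵀW_τG₁, G₁ᵀW_τG₂],[G₂ᵀW_τG₁, G₂ᵀW_τG₂]] is positive definite. Then the top-left (N+1)×(N+1) block of F_Mode2⁻¹ equals F_OWLAS⁻¹. (In the simultaneous-response case, TWLAS Mode 2 and the one-way TOA method OWLAS have identical estimation performance.) -/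
/-!
With `B = G₁ᵀ W_τ G₁` and `Q = δt • P`, the relation `G₂ = G₁ Q` turns `F_Mode2` into
`[[F + B, B Q], [Qᵀ B, Qᵀ B Q]]` with `F = F_OWLAS`. The lower-right block `Qᵀ B Q` is a principal
block of a positive definite matrix, hence invertible, and then so are `Qᵀ`, `B` and `Q`. The
top-left block of the inverse is the inverse of the Schur complement of that block, which
collapses: `F + B - B Q (Qᵀ B Q)⁻¹ Qᵀ B = F + B - B = F`.
-/

open Matrix

namespace Matrix

variable {m n α : Type*} [Fintype m] [Fintype n] [DecidableEq m] [DecidableEq n] [CommRing α]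

theorem toBlocks₁₁_inv_fromBlocks (A : Matrix m m α) (B : Matrix m n α) (C : Matrix n m α)
    (D : Matrix n n α) (hM : IsUnit (fromBlocks A B C D).det) (hD : IsUnit D.det) :
    (fromBlocks A B C D)⁻¹.toBlocks₁₁ = (A - B * D⁻¹ * C)⁻¹ := by
  let := D.invertibleOfIsUnitDet hD
  have hS : IsUnit (A - B * ⅟D * C).det := by
    rw [det_fromBlocks₂₂] at hM
    exact isUnit_of_mul_isUnit_right hM
  let := (A - B * ⅟D * C).invertibleOfIsUnitDet hS
  let := fromBlocks₂₂Invertible A B C D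
  rw [← invOf_eq_nonsing_inv, invOf_fromBlocks₂₂_eq, toBlocks_fromBlocks₁₁,
    invOf_eq_nonsing_inv, invOf_eq_nonsing_inv]

theorem add_sub_mul_mul_inv_mul_cancel (F B Q R : Matrix n n α) (hD : IsUnit (R * B * Q).det) :
    F + B - B * Q * (R * B * Q)⁻¹ * (R * B) = F := by
  rw [det_mul, det_mul, IsUnit.mul_iff, IsUnit.mul_iff] at hD
  obtain ⟨⟨hR, hB⟩, hQ⟩ := hD
  rw [mul_inv_rev, mul_inv_rev]
  simp only [Matrix.mul_assoc]
  rw [mul_nonsing_inv_cancel_left _ _ hQ, nonsing_inv_mul_cancel_left _ _ hR,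
    mul_nonsing_inv_cancel_left _ _ hB, add_sub_cancel_right]

theorem toBlocks₁₁_inv_fromBlocks_mul_mul (F B Q R : Matrix n n α)
    (hM : IsUnit (fromBlocks (F + B) (B * Q) (R * B) (R * B * Q)).det)
    (hD : IsUnit (R * B * Q).det) :
    (fromBlocks (F + B) (B * Q) (R * B) (R * B * Q))⁻¹.toBlocks₁₁ = F⁻¹ := by
  rw [toBlocks₁₁_inv_fromBlocks _ _ _ _ hM hD, add_sub_mul_mul_inv_mul_cancel _ _ _ _ hD]

end Matrix

theorem mode2_equals_owlas_simultaneous_general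
    (M N : ℕ)
    (Wτ : Matrix (Fin M) (Fin M) ℝ)
    (Wρ : Matrix (Fin M) (Fin M) ℝ)
    (G₀ G₁ : Matrix (Fin M) (Fin (N + 1)) ℝ)
    (P : Matrix (Fin (N + 1)) (Fin (N + 1)) ℝ)
    (δt : ℝ)
    (G₂ : Matrix (Fin M) (Fin (N + 1)) ℝ) (hG₂ : G₂ = δt • (G₁ * P))
    (FOWLAS : Matrix (Fin (N + 1)) (Fin (N + 1)) ℝ)
    (hFOWLAS : FOWLAS = G₀ᵀ * Wρ * G₀)
    (FMode2 : Matrix (Fin (N + 1) ⊕ Fin (N + 1)) (Fin (N + 1) ⊕ Fin (N + 1)) ℝ)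
    (hFMode2 : FMode2 = Matrix.fromBlocks
      (G₀ᵀ * Wρ * G₀ + G₁ᵀ * Wτ * G₁) (G₁ᵀ * Wτ * G₂) (G₂ᵀ * Wτ * G₁) (G₂ᵀ * Wτ * G₂))
    (hFMode2pd : FMode2.PosDef) :
    (FMode2⁻¹).toBlocks₁₁ = FOWLAS⁻¹ := by
  set Q := δt • P
  set B := G₁ᵀ * Wτ * G₁
  have hG₂Q : G₂ = G₁ * Q := by rw [hG₂, Matrix.mul_smul]
  have hFM : FMode2 = fromBlocks (FOWLAS + B) (B * Q) (Qᵀ * B) (Qᵀ * B * Q) := by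
    simp only [hFMode2, hFOWLAS, hG₂Q, B, transpose_mul, Matrix.mul_assoc]
  have hD : (Qᵀ * B * Q).PosDef := by
    rw [hFM] at hFMode2pd
    exact hFMode2pd.submatrix Sum.inr_injective
  rw [hFM] at hFMode2pd ⊢
  exact toBlocks₁₁_inv_fromBlocks_mul_mul _ _ _ _ hFMode2pd.det_pos.ne'.isUnit
    hD.det_pos.ne'.isUnit

/-- In the simultaneous-response case (`G₂ = δt·G₁·P`), TWLAS Mode 2 and the
one-way TOA method OWLAS have identical estimation performance: the top-left
`(N+1)×(N+1)` block of `F_Mode2⁻¹` equals `F_OWLAS⁻¹`. -/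
theorem mode2_equals_owlas_simultaneous
    (M N : ℕ) (hM : 0 < M) (hN : 0 < N)
    (σ : ℝ) (hσ : 0 < σ)
    (Wτ : Matrix (Fin M) (Fin M) ℝ)
    (hWτ : Wτ = (1 / σ ^ 2) • (1 : Matrix (Fin M) (Fin M) ℝ))
    (Wρ : Matrix (Fin M) (Fin M) ℝ) (hWρ : Wρ.PosDef)
    (G₀ G₁ : Matrix (Fin M) (Fin (N + 1)) ℝ)
    (P : Matrix (Fin (N + 1)) (Fin (N + 1)) ℝ) (hP : IsUnit P.det)
    (δt : ℝ) (hδt : δt ≠ 0)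
    (G₂ : Matrix (Fin M) (Fin (N + 1)) ℝ) (hG₂ : G₂ = δt • (G₁ * P))
    (hG₁ : IsUnit (G₁ᵀ * G₁).det)
    (FOWLAS : Matrix (Fin (N + 1)) (Fin (N + 1)) ℝ)
    (hFOWLAS : FOWLAS = G₀ᵀ * Wρ * G₀)
    (hFOWLASpd : FOWLAS.PosDef)
    (FMode2 : Matrix (Fin (N + 1) ⊕ Fin (N + 1)) (Fin (N + 1) ⊕ Fin (N + 1)) ℝ)
    (hFMode2 : FMode2 = Matrix.fromBlocks
      (G₀ᵀ * Wρ * G₀ + G₁ᵀ * Wτ * G₁) (G₁ᵀ * Wτ * G₂) (G₂ᵀ * Wτ * G₁) (G₂ᵀ * Wτ * G₂))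
    (hFMode2pd : FMode2.PosDef) :
    (FMode2⁻¹).toBlocks₁₁ = FOWLAS⁻¹ :=
  mode2_equals_owlas_simultaneous_general M N Wτ Wρ G₀ G₁ P δt G₂ hG₂ FOWLAS hFOWLAS FMode2 hFMode2
    hFMode2pd
end
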